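/- For all block indices l < j < n_t and all excitation indices ε, ε' ∈ E, the stiffness matrix satisfies S_{(j,ε),(l,ε')} = (D_{j-1-l})_{ε',ε}; that is, the strictly lower-triangular blocks of the stiffness matrix are the transposes of data matrices. -/
import Mathlib


open Matrix
open scoped RealInnerProductSpace

private lemma iter_inner {H : Type*} [NormedAddCommGroup H] [InnerProductSpace ℝ H]
    (P : H ≃ₗᵢ[ℝ] H) (k : ℕ) (x y : H) : ⟪(⇑P)^[k] x, (⇑P)^[k] y⟫ = ⟪x, y⟫ := by
  induction k with
  | zero => simp
  | succ n ih =>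
    rw [Function.iterate_succ', Function.comp_apply, Function.comp_apply,
      P.inner_map_map, ih]

/-- For all block indices `l < j < n_t` and all excitation indices
`ε, ε' ∈ E`, the stiffness matrix satisfies `S_{(j,ε),(l,ε')} = (D_{j-1-l})_{ε',ε}`;
that is, the strictly lower-triangular blocks of the stiffness matrix are the
transposes of data matrices. -/
theorem stiffness_matrix_lower_blocks
    {H : Type*} [NormedAddCommGroup H] [InnerProductSpace ℝ H]
    {E : Type*} [Fintype E] [Nonempty E]
    (P : H ≃ₗᵢ[ℝ] H) (φ₀ : E → H) (n_t : ℕ) (hn : 1 ≤ n_t)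
    (φ : ℕ → E → H) (hφ : ∀ j ε, φ j ε = (⇑P)^[j] (φ₀ ε))
    (D : ℕ → Matrix E E ℝ) (hD : ∀ j ε' ε, D j ε' ε = ⟪φ₀ ε', φ j ε⟫)
    (S : Matrix (Fin n_t × E) (Fin n_t × E) ℝ)
    (hS : ∀ (j l : Fin n_t) (ε ε' : E),
      S (j, ε) (l, ε') = ⟪φ (j : ℕ) ε, P (φ (l : ℕ) ε')⟫) :
    ∀ (j l : Fin n_t), (l : ℕ) < (j : ℕ) → ∀ (ε ε' : E),
      S (j, ε) (l, ε') = D ((j : ℕ) - 1 - (l : ℕ)) ε' ε := by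
  intro j l hlj ε ε'
  rw [hS, hD, hφ, hφ, hφ]
  have hj : (j : ℕ) = ((l : ℕ) + 1) + ((j : ℕ) - 1 - (l : ℕ)) := by omega
  have hidx : ((l : ℕ) + 1) + ((j : ℕ) - 1 - (l : ℕ)) - 1 - (l : ℕ) = (j : ℕ) - 1 - (l : ℕ) := by omega
  rw [hj, hidx, Function.iterate_add_apply]
  have : P ((⇑P)^[(l : ℕ)] (φ₀ ε')) = (⇑P)^[(l : ℕ) + 1] (φ₀ ε') := by
    rw [Function.iterate_succ', Function.comp_apply]
  rw [this, iter_inner P ((l : ℕ) + 1), real_inner_comm]
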